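/- For the Lie algebra with brackets [e3,e4]=(1/2)e2, [e1,e2]=e2, [e1,e3]=(1/2)e3, [e1,e4]=(1/2)e4, the 2-forms ω1=-e^12+e^34, ω2=-e^13-e^24, ω3=e^14-e^23 satisfy dω_α = -(3/2)e^1 ∧ ω_α for α=1,2,3, and de^1=0. -/
import Mathlib

noncomputable section

/-- The bracket of the Lie algebra with `[e3,e4]=(1/2)e2`, `[e1,e2]=e2`, `[e1,e3]=(1/2)e3`,
`[e1,e4]=(1/2)e4` (indices shifted down by one: `e1,...,e4` are coordinates `0,...,3`). -/
def br (u v : Fin 4 → ℝ) : Fin 4 → ℝ :=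
  ![0, (u 0 * v 1 - u 1 * v 0) + (1/2) * (u 2 * v 3 - u 3 * v 2),
    (1/2) * (u 0 * v 2 - u 2 * v 0), (1/2) * (u 0 * v 3 - u 3 * v 0)]

/-- Dual basis: `E i` is the `i`-th coordinate functional (so `E 0 = e^1`, ..., `E 3 = e^4`). -/
def E (i : Fin 4) (v : Fin 4 → ℝ) : ℝ := v i

/-- Chevalley–Eilenberg differential of a 1-form: `dσ(x,y) = -σ([x,y])`. -/
def d1 (σ : (Fin 4 → ℝ) → ℝ) (x y : Fin 4 → ℝ) : ℝ := -σ (br x y)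

/-- Wedge of two 1-forms. -/
def w (a b : (Fin 4 → ℝ) → ℝ) (x y : Fin 4 → ℝ) : ℝ := a x * b y - a y * b x

/-- Chevalley–Eilenberg differential of a 2-form:
`dω(x,y,z) = -ω([x,y],z) + ω([x,z],y) - ω([y,z],x)`. -/
def d2 (ω : (Fin 4 → ℝ) → (Fin 4 → ℝ) → ℝ) (x y z : Fin 4 → ℝ) : ℝ :=
  -(ω (br x y) z) + ω (br x z) y - ω (br y z) x

/-- Wedge of a 1-form with a 2-form. -/
def w12 (θ : (Fin 4 → ℝ) → ℝ) (ω : (Fin 4 → ℝ) → (Fin 4 → ℝ) → ℝ)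
    (x y z : Fin 4 → ℝ) : ℝ := θ x * ω y z - θ y * ω x z + θ z * ω x y

/-- `ω1 = -e^12 + e^34`. -/
def ω1 (x y : Fin 4 → ℝ) : ℝ := -(w (E 0) (E 1) x y) + w (E 2) (E 3) x y
/-- `ω2 = -e^13 - e^24`. -/
def ω2 (x y : Fin 4 → ℝ) : ℝ := -(w (E 0) (E 2) x y) - w (E 1) (E 3) x y
/-- `ω3 = e^14 - e^23`. -/
def ω3 (x y : Fin 4 → ℝ) : ℝ := w (E 0) (E 3) x y - w (E 1) (E 2) x y

/-- `dω_α = -(3/2)e^1 ∧ ω_α` for `α = 1,2,3`, and `de^1 = 0`. -/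
theorem lee_form_case4 :
    (∀ x y z, d2 ω1 x y z = -(3/2) * w12 (E 0) ω1 x y z) ∧
    (∀ x y z, d2 ω2 x y z = -(3/2) * w12 (E 0) ω2 x y z) ∧
    (∀ x y z, d2 ω3 x y z = -(3/2) * w12 (E 0) ω3 x y z) ∧
    (∀ x y, d1 (E 0) x y = 0) := by
  refine ⟨?_, ?_, ?_, ?_⟩ <;> intros <;>
    simp only [d2, d1, w12, w, E, br, ω1, ω2, ω3, Matrix.cons_val_zero, Matrix.cons_val_one,
      Matrix.head_cons, Matrix.cons_val_two, Matrix.tail_cons, Matrix.cons_val_three] <;> ring
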